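/- Let I be a monomial ideal with lcm-lattice L, and let I' be the subideal of I generated by the minimal generators of I not divisible by a fixed variable x_t, with lcm-lattice L'. Then L' is a sublattice of L, and for every σ ∈ L', the height of σ in L equals the height of σ in L'. -/

import Mathlib

noncomputable section

abbrev Mon (n : ℕ) : Type := Fin (n+1) →₀ ℕ

/-- height of σ in a lattice L of monomials: the length of the longest chain in `[1, σ] ∩ L`
ending at σ (the bottom `1`, i.e. the zero exponent vector, belongs to `L`). -/
def heightIn {n : ℕ} (L : Set (Mon n)) (σ : Mon n) : ℕ :=
  sSup {r : ℕ | ∃ c : Fin (r+1) → Mon n, StrictMono c ∧ (∀ i, c i ∈ L ∧ c i ≤ σ) ∧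
    c (Fin.last r) = σ}

/-- the lcm lattice of a set of monomials: all lcms (pointwise sups) of subsets,
including the bottom element `1` (the empty lcm). -/
def lcmLattice {n : ℕ} (G : Finset (Mon n)) : Finset (Mon n) :=
  G.powerset.image fun F => F.sup id

/-!
Every element of `L'` has `t`-exponent `0`, and so does everything below it; an element of `L`
below `σ ∈ L'` is thus an lcm of generators not divisible by `x_t`, i.e. it lies in `L'`. So
`L` and `L'` have the same interval `[1, σ]`, and the height of `σ` only depends on that
interval.
-/

section LcmLattice

variable {n : ℕ} {G G' : Finset (Mon n)} {σ τ : Mon n}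

lemma mem_lcmLattice : σ ∈ lcmLattice G ↔ ∃ F ⊆ G, F.sup id = σ := by
  simp [lcmLattice]

lemma lcmLattice_mono (h : G' ⊆ G) : lcmLattice G' ⊆ lcmLattice G := by
  intro σ hσ
  obtain ⟨F, hF, rfl⟩ := mem_lcmLattice.mp hσ
  exact mem_lcmLattice.mpr ⟨F, hF.trans h, rfl⟩

lemma sup_mem_lcmLattice (hσ : σ ∈ lcmLattice G) (hτ : τ ∈ lcmLattice G) :
    σ ⊔ τ ∈ lcmLattice G := by
  obtain ⟨F₁, hF₁, rfl⟩ := mem_lcmLattice.mp hσ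
  obtain ⟨F₂, hF₂, rfl⟩ := mem_lcmLattice.mp hτ
  exact mem_lcmLattice.mpr ⟨F₁ ∪ F₂, Finset.union_subset hF₁ hF₂, Finset.sup_union⟩

lemma mem_lcmLattice_filter {p : Mon n → Prop} [DecidablePred p]
    (hp : ∀ a b, a ≤ b → p b → p a) (hτ : τ ∈ lcmLattice G) (hpτ : p τ) :
    τ ∈ lcmLattice (G.filter p) := by
  obtain ⟨F, hF, rfl⟩ := mem_lcmLattice.mp hτ
  refine mem_lcmLattice.mpr ⟨F, fun g hg => Finset.mem_filter.mpr ⟨hF hg, ?_⟩, rfl⟩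
  exact hp g _ (Finset.le_sup (f := id) hg) hpτ

lemma apply_eq_zero_of_mem_lcmLattice_filter {t : Fin (n+1)}
    (hσ : σ ∈ lcmLattice (G.filter fun g => g t = 0)) : σ t = 0 := by
  obtain ⟨F, hF, rfl⟩ := mem_lcmLattice.mp hσ
  refine Finset.sup_induction (p := fun m : Mon n => m t = 0) rfl ?_ ?_
  · intro a ha b hb
    simp [Finsupp.sup_apply, ha, hb]
  · exact fun g hg => (Finset.mem_filter.mp (hF hg)).2

end LcmLattice

lemma heightIn_congr {n : ℕ} {L L' : Set (Mon n)} {σ : Mon n}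
    (h : ∀ x ≤ σ, x ∈ L ↔ x ∈ L') : heightIn L σ = heightIn L' σ := by
  unfold heightIn
  congr 1
  ext r
  constructor <;> rintro ⟨c, hc, hmem, hlast⟩
  · exact ⟨c, hc, fun i => ⟨(h _ (hmem i).2).mp (hmem i).1, (hmem i).2⟩, hlast⟩
  · exact ⟨c, hc, fun i => ⟨(h _ (hmem i).2).mpr (hmem i).1, (hmem i).2⟩, hlast⟩

theorem stmt6_general {n : ℕ}
    (G : Finset (Mon n))
    (t : Fin (n+1)) (G' : Finset (Mon n)) (hG' : G' = G.filter (fun g => g t = 0))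
    (L L' : Finset (Mon n)) (hL : L = lcmLattice G) (hL' : L' = lcmLattice G') :
    L' ⊆ L ∧ (∀ a ∈ L', ∀ b ∈ L', a ⊔ b ∈ L') ∧
    ∀ σ ∈ L', heightIn (L : Set (Mon n)) σ = heightIn (L' : Set (Mon n)) σ := by
  subst hG' hL hL'
  have hL'L := lcmLattice_mono (Finset.filter_subset (fun g : Mon n => g t = 0) G)
  refine ⟨hL'L, fun a ha b hb => sup_mem_lcmLattice ha hb, fun σ hσ => heightIn_congr ?_⟩
  intro x hxσ
  have hx : x t = 0 := Nat.eq_zero_of_le_zero <|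
    (hxσ t).trans (apply_eq_zero_of_mem_lcmLattice_filter hσ).le
  exact ⟨fun h => mem_lcmLattice_filter (fun a b hab hb => Nat.eq_zero_of_le_zero <|
    (hab t).trans hb.le) h hx, fun h => hL'L h⟩

/-- Let `I` be a monomial ideal with minimal generating set `G` and
lcm-lattice `L`, and `I'` the subideal generated by the minimal generators not divisible by a
fixed variable `x_t`, with lcm-lattice `L'`.  Then `L'` is a sublattice of `L` (it is contained
in `L` and closed under lcm), and for every `σ ∈ L'`, the height of `σ` in `L` equals its
height in `L'`. -/
theorem stmt6 {n : ℕ}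
    (G : Finset (Mon n)) (hG0 : ∀ g ∈ G, g ≠ 0)
    (hGmin : ∀ g ∈ G, ∀ g' ∈ G, g ≤ g' → g = g')
    (t : Fin (n+1)) (G' : Finset (Mon n)) (hG' : G' = G.filter (fun g => g t = 0))
    (L L' : Finset (Mon n)) (hL : L = lcmLattice G) (hL' : L' = lcmLattice G') :
    L' ⊆ L ∧ (∀ a ∈ L', ∀ b ∈ L', a ⊔ b ∈ L') ∧
    ∀ σ ∈ L', heightIn (L : Set (Mon n)) σ = heightIn (L' : Set (Mon n)) σ :=
  stmt6_general G t G' hG' L L' hL hL'
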